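/- The natural transformation ν_{V,W} : I(V⊗W) → I(V)⊗I(W) given by g⊗(v_d⊗w_f) ↦ γ(g)(d,f)·(g⊗v_d)⊗(g⊗w_f), together with the counit I(1) → 1, g⊗1 ↦ 1, equips the induction functor I : Z(Vect_H^ω) → Z(Vect_G^ω) with an oplax monoidal structure: each ν_{V,W} is a morphism of twisted Yetter–Drinfeld modules over (G,ω), and the oplax associativity and counitality coherence conditions hold. -/

import Mathlib

open scoped TensorProduct

namespace DW

/-! ### Cocycle combinatorics -/

section Cocycle

variable {G : Type*} [Group G] {M : Type*} [CommGroup M]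

/-- The 3-cocycle condition for a function `ω : G³ → M`. -/
def IsCocycle (ω : G → G → G → M) : Prop :=
  ∀ a b c d : G, ω (a * b) c d * ω a b (c * d) = ω a b c * ω a (b * c) d * ω b c d

/-- `ω` is normalized if it takes the value `1` whenever an argument is `1`. -/
def IsNormalized (ω : G → G → G → M) : Prop :=
  ∀ a b c : G, a = 1 ∨ b = 1 ∨ c = 1 → ω a b c = 1

/-- `τ(h,k)(d) = ω(h,k,d)·ω(hkd(hk)⁻¹,h,k)/ω(h,kdk⁻¹,k)`. -/
def tauc (ω : G → G → G → M) (h k d : G) : M :=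
  ω h k d * ω (h * k * d * (h * k)⁻¹) h k * (ω h (k * d * k⁻¹) k)⁻¹

/-- `γ(h)(d,f) = ω(h,d,f)·ω(hdh⁻¹,hfh⁻¹,h)/ω(hdh⁻¹,h,f)`. -/
def gamc (ω : G → G → G → M) (h d f : G) : M :=
  ω h d f * ω (h * d * h⁻¹) (h * f * h⁻¹) h * (ω (h * d * h⁻¹) h f)⁻¹

end Cocycle

/-! ### Twisted Yetter–Drinfeld modules -/

/-- A twisted Yetter–Drinfeld module structure over `(G, ω)` on a `k`-vector space `M`:
a `G`-grading (given internally by submodules) together with a twisted `G`-action. -/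
structure YDOn (k : Type*) [Field k] {G : Type*} [Group G] [DecidableEq G]
    (ω : G → G → G → kˣ) (M : Type*) [AddCommGroup M] [Module k M] where
  grading : G → Submodule k M
  internal : DirectSum.IsInternal grading
  act : G → M →ₗ[k] M
  act_one : act 1 = LinearMap.id
  act_mem : ∀ (g d : G), ∀ v ∈ grading d, act g v ∈ grading (g * d * g⁻¹)
  act_act : ∀ (h g d : G), ∀ v ∈ grading d,
    act h (act g v) = ((tauc ω h g d : kˣ) : k) • act (h * g) v

section YD

variable {k : Type*} [Field k] {G : Type*} [Group G] [DecidableEq G] {ω : G → G → G → kˣ}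

/-- Morphisms of twisted Yetter–Drinfeld modules: grading-preserving and `G`-equivariant. -/
def IsYDHom {M N : Type*} [AddCommGroup M] [Module k M] [AddCommGroup N] [Module k N]
    (S : YDOn k ω M) (T : YDOn k ω N) (f : M →ₗ[k] N) : Prop :=
  (∀ d : G, ∀ v ∈ S.grading d, f v ∈ T.grading d) ∧
  ∀ g : G, f ∘ₗ S.act g = T.act g ∘ₗ f

/-- `θ` is the ribbon twist map, i.e. `θ(v_d) = d·v_d` on homogeneous elements. -/
def IsTwistMap {M : Type*} [AddCommGroup M] [Module k M] (S : YDOn k ω M)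
    (θ : M →ₗ[k] M) : Prop :=
  ∀ d : G, ∀ v ∈ S.grading d, θ v = S.act d v

/-- `T` is the tensor-product Yetter–Drinfeld structure on `V ⊗ W`:
grading `(V⊗W)_d = ⊕_{ab=d} V_a ⊗ W_b`, action `h·(v_a⊗w_b) = γ(h)(a,b) (h·v ⊗ h·w)`. -/
def IsTensorStruct {V W : Type*} [AddCommGroup V] [Module k V] [AddCommGroup W] [Module k W]
    (SV : YDOn k ω V) (SW : YDOn k ω W) (T : YDOn k ω (V ⊗[k] W)) : Prop :=
  (∀ d : G, T.grading d =
      ⨆ a : G, Submodule.map₂ (TensorProduct.mk k V W) (SV.grading a) (SW.grading (a⁻¹ * d))) ∧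
  ∀ (h a b : G) (v : V) (w : W), v ∈ SV.grading a → w ∈ SW.grading b →
    T.act h (v ⊗ₜ[k] w) = ((gamc ω h a b : kˣ) : k) • (SV.act h v ⊗ₜ[k] SW.act h w)

/-- `c` is the braiding `c_{V,W}(v_g ⊗ w) = (g·w) ⊗ v_g`. -/
def IsBraidingMap {V W : Type*} [AddCommGroup V] [Module k V] [AddCommGroup W] [Module k W]
    (SV : YDOn k ω V) (SW : YDOn k ω W) (c : V ⊗[k] W →ₗ[k] W ⊗[k] V) : Prop :=
  ∀ (g : G) (v : V) (w : W), v ∈ SV.grading g → c (v ⊗ₜ[k] w) = SW.act g w ⊗ₜ[k] v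

/-- `a` is the associator `α((u_g⊗v_h)⊗w_l) = ω(g,h,l)⁻¹ u⊗(v⊗w)`. -/
def IsAssocMap {U V W : Type*} [AddCommGroup U] [Module k U] [AddCommGroup V] [Module k V]
    [AddCommGroup W] [Module k W]
    (SU : YDOn k ω U) (SV : YDOn k ω V) (SW : YDOn k ω W)
    (a : (U ⊗[k] V) ⊗[k] W →ₗ[k] U ⊗[k] (V ⊗[k] W)) : Prop :=
  ∀ (g h l : G) (u : U) (v : V) (w : W),
    u ∈ SU.grading g → v ∈ SV.grading h → w ∈ SW.grading l →
    a ((u ⊗ₜ[k] v) ⊗ₜ[k] w) = (((ω g h l)⁻¹ : kˣ) : k) • (u ⊗ₜ[k] (v ⊗ₜ[k] w))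

/-- `a` is the inverse associator `α⁻¹(u_g⊗(v_h⊗w_l)) = ω(g,h,l) (u⊗v)⊗w`. -/
def IsAssocInvMap {U V W : Type*} [AddCommGroup U] [Module k U] [AddCommGroup V] [Module k V]
    [AddCommGroup W] [Module k W]
    (SU : YDOn k ω U) (SV : YDOn k ω V) (SW : YDOn k ω W)
    (a : U ⊗[k] (V ⊗[k] W) →ₗ[k] (U ⊗[k] V) ⊗[k] W) : Prop :=
  ∀ (g h l : G) (u : U) (v : V) (w : W),
    u ∈ SU.grading g → v ∈ SV.grading h → w ∈ SW.grading l →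
    a (u ⊗ₜ[k] (v ⊗ₜ[k] w)) = ((ω g h l : kˣ) : k) • ((u ⊗ₜ[k] v) ⊗ₜ[k] w)

/-- The unit object: `k` concentrated in degree `1` with trivial action. -/
def IsUnitStruct (S : YDOn k ω k) : Prop :=
  S.grading 1 = ⊤ ∧ (∀ d : G, d ≠ 1 → S.grading d = ⊥) ∧ ∀ g : G, S.act g = LinearMap.id

end YD

/-! ### The induction functor -/

section Induced

variable {k : Type*} [Field k] {G : Type*} [Group G] [DecidableEq G]
variable (ω : G → G → G → kˣ) (H : Subgroup G)

/-- Restriction of a 3-cocycle on `G` to a subgroup `H`. -/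
def resCocycle : ↥H → ↥H → ↥H → kˣ := fun a b c => ω ↑a ↑b ↑c

variable {V : Type*} [AddCommGroup V] [Module k V]

/-- The relations `g h ⊗ v_d = τ(g,h)(d)⁻¹ g ⊗ (h·v_d)` defining `I(V) = kG ⊗_{kH} V`. -/
noncomputable def indRel (S : YDOn k (resCocycle ω H) V) : Submodule k (G →₀ V) :=
  Submodule.span k
    {x | ∃ (g : G) (h d : ↥H) (v : V), v ∈ S.grading d ∧
      x = Finsupp.single (g * ↑h) v
        - (((tauc ω g ↑h ↑d)⁻¹ : kˣ) : k) • Finsupp.single g (S.act h v)}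

/-- The carrier of the induced module `I(V)`. -/
abbrev IndCarrier (S : YDOn k (resCocycle ω H) V) : Type _ :=
  (G →₀ V) ⧸ indRel ω H S

/-- The generator `g ⊗ v` of `I(V)`. -/
noncomputable def jgen (S : YDOn k (resCocycle ω H) V) (g : G) (v : V) : IndCarrier ω H S :=
  Submodule.Quotient.mk (Finsupp.single g v)

/-- `T` is the twisted Yetter–Drinfeld structure of the induced module `I(V)`:
`deg (g⊗v_e) = g e g⁻¹` and `c ⊳ (g⊗v_e) = τ(c,g)(e) (cg ⊗ v_e)`. -/
def IsIndStruct (S : YDOn k (resCocycle ω H) V) (T : YDOn k ω (IndCarrier ω H S)) : Prop :=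
  (∀ d : G, T.grading d = Submodule.span k
      {x | ∃ (g : G) (e : ↥H) (v : V), v ∈ S.grading e ∧ g * ↑e * g⁻¹ = d ∧
        x = jgen ω H S g v}) ∧
  ∀ (c g : G) (e : ↥H) (v : V), v ∈ S.grading e →
    T.act c (jgen ω H S g v) = ((tauc ω c g ↑e : kˣ) : k) • jgen ω H S (c * g) v

/-- `F` is the induced morphism `I(f)` of a morphism `f`. -/
def IsIndMap {W : Type*} [AddCommGroup W] [Module k W]
    (S : YDOn k (resCocycle ω H) V) (S' : YDOn k (resCocycle ω H) W)
    (f : V →ₗ[k] W) (F : IndCarrier ω H S →ₗ[k] IndCarrier ω H S') : Prop :=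
  ∀ (g : G) (v : V), F (jgen ω H S g v) = jgen ω H S' g (f v)

/-- `ν` is the oplax structure map
`ν(g ⊗ (a_d ⊗ b_f)) = γ(g)(d,f) (g⊗a) ⊗ (g⊗b)`. -/
def IsNuMap {A B : Type*} [AddCommGroup A] [Module k A] [AddCommGroup B] [Module k B]
    (SA : YDOn k (resCocycle ω H) A) (SB : YDOn k (resCocycle ω H) B)
    (SAB : YDOn k (resCocycle ω H) (A ⊗[k] B))
    (ν : IndCarrier ω H SAB →ₗ[k] IndCarrier ω H SA ⊗[k] IndCarrier ω H SB) : Prop :=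
  ∀ (g : G) (d f : ↥H) (a : A) (b : B), a ∈ SA.grading d → b ∈ SB.grading f →
    ν (jgen ω H SAB g (a ⊗ₜ[k] b)) =
      ((gamc ω g ↑d ↑f : kˣ) : k) • (jgen ω H SA g a ⊗ₜ[k] jgen ω H SB g b)

/-- `μ` is the lax structure map: zero across distinct cosets and
`μ((g⊗a_d) ⊗ (g⊗b_f)) = γ(g)(d,f)⁻¹ (g ⊗ (a⊗b))`. -/
def IsMuMap {A B : Type*} [AddCommGroup A] [Module k A] [AddCommGroup B] [Module k B]
    (SA : YDOn k (resCocycle ω H) A) (SB : YDOn k (resCocycle ω H) B)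
    (SAB : YDOn k (resCocycle ω H) (A ⊗[k] B))
    (μ : IndCarrier ω H SA ⊗[k] IndCarrier ω H SB →ₗ[k] IndCarrier ω H SAB) : Prop :=
  (∀ g g' : G, g⁻¹ * g' ∉ H → ∀ (a : A) (b : B),
      μ (jgen ω H SA g a ⊗ₜ[k] jgen ω H SB g' b) = 0) ∧
  ∀ (g : G) (d f : ↥H) (a : A) (b : B), a ∈ SA.grading d → b ∈ SB.grading f →
    μ (jgen ω H SA g a ⊗ₜ[k] jgen ω H SB g b) =
      (((gamc ω g ↑d ↑f)⁻¹ : kˣ) : k) • jgen ω H SAB g (a ⊗ₜ[k] b)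

/-- The counit `I(1) → 1`, `g ⊗ c ↦ c`. -/
def IsCounitMap (S1 : YDOn k (resCocycle ω H) k)
    (ε : IndCarrier ω H S1 →ₗ[k] k) : Prop :=
  ∀ (g : G) (c : k), ε (jgen ω H S1 g c) = c

/-- The unit `1 → I(1)`, `1 ↦ ∑ᵢ gᵢ ⊗ 1` over a set `R` of left coset representatives. -/
def IsUnitMap (S1 : YDOn k (resCocycle ω H) k) (R : Finset G)
    (η : k →ₗ[k] IndCarrier ω H S1) : Prop :=
  (∀ g : G, ∃! r, r ∈ R ∧ g⁻¹ * r ∈ H) ∧ η 1 = ∑ r ∈ R, jgen ω H S1 r (1 : k)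

end Induced

/-! ### The coset algebra and classification data -/

section AH

variable (k : Type*) [Field k] {G : Type*} [Group G]

/-- The twisted action of `G` on functions on `G/H` : `(c·f)(x) = f(c⁻¹x)`. -/
def cosetAct (H : Subgroup G) (c : G) : ((G ⧸ H) → k) →ₗ[k] ((G ⧸ H) → k) :=
  LinearMap.funLeft k k fun x => c⁻¹ • x

/-- Basis element `e_n` of the twisted group algebra `B(N,κ,ε)`. -/
noncomputable def bGen {H : Type*} [Group H] (N : Subgroup H) (n : ↥N) : ↥N →₀ k :=
  Finsupp.single n 1

end AH

section ClassData

variable {H : Type*} [Group H] {M : Type*} [CommGroup M]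

/-- The conditions on the classification data `(N, κ, ε)` from Davydov–Simmons. -/
def ClassData (ω : H → H → H → M) (N : Subgroup H) (κ ε : H → H → M) : Prop :=
  (∀ n ∈ N, κ n 1 = 1 ∧ κ 1 n = 1) ∧
  (∀ n ∈ N, ∀ m ∈ N, ∀ l ∈ N,
      ω n m l = κ n m * (κ m l)⁻¹ * κ (n * m) l * (κ n (m * l))⁻¹) ∧
  (∀ h g : H, ∀ n ∈ N, tauc ω h g n = ε h (g * n * g⁻¹) * ε g n * (ε (h * g) n)⁻¹) ∧
  (∀ h : H, ∀ n ∈ N, ∀ m ∈ N,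
      gamc ω h n m
        = ε h (n * m) * (ε h n)⁻¹ * (ε h m)⁻¹ * κ (h * n * h⁻¹) (h * m * h⁻¹) * (κ n m)⁻¹) ∧
  ∀ n ∈ N, ∀ m ∈ N, κ (n * m * n⁻¹) n = ε n m * κ n m

end ClassData

section BStruct

variable {k : Type*} [Field k] {H : Type*} [Group H] [DecidableEq H]

/-- The twisted Yetter–Drinfeld structure of `B(N,κ,ε)`:
`e_n` has degree `n` and `h·e_n = ε_h(n) e_{hnh⁻¹}`. -/
def IsBStruct (ω : H → H → H → kˣ) (N : Subgroup H) (hN : N.Normal) (ε : H → H → kˣ)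
    (S : YDOn k ω (↥N →₀ k)) : Prop :=
  (∀ d : H, S.grading d = Submodule.span k {x | ∃ n : ↥N, ↑n = d ∧ x = bGen k N n}) ∧
  ∀ (h : H) (n : ↥N), S.act h (bGen k N n) =
    ((ε h ↑n : kˣ) : k) • bGen k N ⟨h * ↑n * h⁻¹, hN.conj_mem ↑n n.2 h⟩

/-- The multiplication of `B(N,κ,ε)`: `e_n e_m = κ(n,m)⁻¹ e_{nm}`. -/
def IsBMul (N : Subgroup H) (κ : H → H → kˣ)
    (mulB : (↥N →₀ k) ⊗[k] (↥N →₀ k) →ₗ[k] (↥N →₀ k)) : Prop :=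
  ∀ n m : ↥N, mulB (bGen k N n ⊗ₜ[k] bGen k N m) =
    (((κ ↑n ↑m)⁻¹ : kˣ) : k) • bGen k N (n * m)

end BStruct

/-! ### Algebras, étale algebras and Frobenius algebras in the category -/

section Algebras

variable {k : Type*} [Field k] {G : Type*} [Group G] [DecidableEq G] {ω : G → G → G → kˣ}
variable {M : Type*} [AddCommGroup M] [Module k M]

/-- `(M, mulM, uM)` is a connected étale (= connected commutative separable) algebra in
`Z(Vect_G^ω)`. -/
def IsConnectedEtale (T : YDOn k ω M) (mulM : M ⊗[k] M →ₗ[k] M) (uM : k →ₗ[k] M) : Prop :=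
  -- the multiplication is a morphism in the category
  (∃ Tt : YDOn k ω (M ⊗[k] M), IsTensorStruct T T Tt ∧ IsYDHom Tt T mulM) ∧
  -- the unit is a morphism in the category
  (uM 1 ∈ T.grading 1) ∧ (∀ g : G, T.act g (uM 1) = uM 1) ∧
  -- unitality
  (∀ x : M, mulM (uM 1 ⊗ₜ[k] x) = x ∧ mulM (x ⊗ₜ[k] uM 1) = x) ∧
  -- associativity (with respect to the associator of the category)
  (∃ a, IsAssocMap T T T a ∧
      mulM ∘ₗ TensorProduct.map mulM LinearMap.id
        = mulM ∘ₗ TensorProduct.map LinearMap.id mulM ∘ₗ a) ∧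
  -- commutativity
  (∃ c, IsBraidingMap T T c ∧ mulM ∘ₗ c = mulM) ∧
  -- separability
  (∃ (Δ' : M →ₗ[k] M ⊗[k] M) (Tt : YDOn k ω (M ⊗[k] M))
      (a : (M ⊗[k] M) ⊗[k] M →ₗ[k] M ⊗[k] (M ⊗[k] M))
      (a' : M ⊗[k] (M ⊗[k] M) →ₗ[k] (M ⊗[k] M) ⊗[k] M),
      IsTensorStruct T T Tt ∧ IsAssocMap T T T a ∧ IsAssocInvMap T T T a' ∧
      IsYDHom T Tt Δ' ∧ mulM ∘ₗ Δ' = LinearMap.id ∧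
      TensorProduct.map LinearMap.id mulM ∘ₗ a ∘ₗ TensorProduct.map Δ' LinearMap.id
        = Δ' ∘ₗ mulM ∧
      Δ' ∘ₗ mulM
        = TensorProduct.map mulM LinearMap.id ∘ₗ a' ∘ₗ TensorProduct.map LinearMap.id Δ') ∧
  -- connectedness : Hom(1, M) is one-dimensional
  Module.finrank k
    ↥(T.grading 1 ⊓ ⨅ g : G, LinearMap.eqLocus (T.act g) (LinearMap.id : M →ₗ[k] M)) = 1

/-- `(M, mulM, uM)` is a rigid Frobenius (= connected commutative special Frobenius)
algebra in `Z(Vect_G^ω)`. -/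
def IsRigidFrobenius (T : YDOn k ω M) (mulM : M ⊗[k] M →ₗ[k] M) (uM : k →ₗ[k] M) : Prop :=
  IsConnectedEtale T mulM uM ∧
  ∃ (Δ : M →ₗ[k] M ⊗[k] M) (εM : M →ₗ[k] k),
    -- Δ and ε are morphisms in the category
    (∃ Tt : YDOn k ω (M ⊗[k] M), IsTensorStruct T T Tt ∧ IsYDHom T Tt Δ) ∧
    (∀ g : G, εM ∘ₗ T.act g = εM) ∧ (∀ d : G, d ≠ 1 → ∀ v ∈ T.grading d, εM v = 0) ∧
    -- coassociativity and counitality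
    (∀ a, IsAssocMap T T T a →
        a ∘ₗ TensorProduct.map Δ LinearMap.id ∘ₗ Δ = TensorProduct.map LinearMap.id Δ ∘ₗ Δ) ∧
    (TensorProduct.lid k M).toLinearMap ∘ₗ TensorProduct.map εM LinearMap.id ∘ₗ Δ
      = LinearMap.id ∧
    (TensorProduct.rid k M).toLinearMap ∘ₗ TensorProduct.map LinearMap.id εM ∘ₗ Δ
      = LinearMap.id ∧
    -- the Frobenius compatibility
    (∀ a a', IsAssocMap T T T a → IsAssocInvMap T T T a' →
        TensorProduct.map mulM LinearMap.id ∘ₗ a' ∘ₗ TensorProduct.map LinearMap.id Δ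
          = Δ ∘ₗ mulM ∧
        Δ ∘ₗ mulM = TensorProduct.map LinearMap.id mulM ∘ₗ a ∘ₗ TensorProduct.map Δ LinearMap.id) ∧
    -- specialness
    (∃ β : k, β ≠ 0 ∧ mulM ∘ₗ Δ = β • LinearMap.id) ∧
    ∃ β1 : k, β1 ≠ 0 ∧ εM (uM 1) = β1

/-- `(V, ρ)` is a local right module over the commutative algebra `(A, mulA, u)`. -/
def IsLocModule {A V : Type*} [AddCommGroup A] [Module k A] [AddCommGroup V] [Module k V]
    (SA : YDOn k ω A) (mulA : A ⊗[k] A →ₗ[k] A) (u : A)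
    (SV : YDOn k ω V) (ρ : V →ₗ[k] A →ₗ[k] V) : Prop :=
  (∀ d e : G, ∀ v ∈ SV.grading d, ∀ a ∈ SA.grading e, ρ v a ∈ SV.grading (d * e)) ∧
  (∀ v : V, ρ v u = v) ∧
  (∀ (d e f : G) (v : V) (a b : A), v ∈ SV.grading d → a ∈ SA.grading e → b ∈ SA.grading f →
      ρ (ρ v a) b = (((ω d e f)⁻¹ : kˣ) : k) • ρ v (mulA (a ⊗ₜ[k] b))) ∧
  (∀ (h d e : G) (v : V) (a : A), v ∈ SV.grading d → a ∈ SA.grading e →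
      SV.act h (ρ v a) = ((gamc ω h d e : kˣ) : k) • ρ (SV.act h v) (SA.act h a)) ∧
  ∀ (d e : G) (v : V) (a : A), v ∈ SV.grading d → a ∈ SA.grading e →
    ρ v a = ρ (SV.act (d * e * d⁻¹) v) (SA.act d a)

/-- The submodule of `X ⊗ Y` which is divided out to form the relative tensor product
`X ⊗_A Y` over a commutative algebra `A` (the left action on `Y` is obtained from the
right action through the braiding). -/
def relLoc {A X Y : Type*} [AddCommGroup A] [Module k A] [AddCommGroup X] [Module k X]
    [AddCommGroup Y] [Module k Y]
    (SA : YDOn k ω A) (SY : YDOn k ω Y)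
    (ρX : X →ₗ[k] A →ₗ[k] X) (ρY : Y →ₗ[k] A →ₗ[k] Y) : Submodule k (X ⊗[k] Y) :=
  Submodule.span k
    {t | ∃ (e : G) (a : A) (x : X) (y : Y), a ∈ SA.grading e ∧
      t = ρX x a ⊗ₜ[k] y - x ⊗ₜ[k] ρY (SY.act e y) a}

end Algebras

end DW

open DW

/-!
The module `I(V ⊗ W)` is spanned by the classes of `g ⊗ (v_d ⊗ w_f)` with `v_d`, `w_f`
homogeneous, so every claim reduces to an identity between scalars on these generators.
Equivariance of `ν` becomes the compatibility `IsCocycle.tauc_mul_gamc` of `τ` with `γ`;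
associativity becomes `IsCocycle.gamc_mul_gamc_mul`, which says that the coboundary of the
2-cochain `γ(g)` is `ω / ω^g`, where `ω^g` is `ω` with its arguments conjugated by `g`;
counitality becomes `γ(g)(1,f) = γ(g)(d,1) = 1`. The first two identities are products of
instances of the 3-cocycle condition, the last holds because `ω` is normalized.
-/

namespace DW

section Cocycle

variable {G : Type*} [Group G] {M : Type*} [CommGroup M] {ω : G → G → G → M}

theorem IsNormalized.gamc_one_left (hω : IsNormalized ω) (g f : G) : gamc ω g 1 f = 1 := by
  simp [gamc, hω g 1 f (by simp), hω 1 (g * f * g⁻¹) g (by simp), hω 1 g f (by simp)]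

theorem IsNormalized.gamc_one_right (hω : IsNormalized ω) (g d : G) : gamc ω g d 1 = 1 := by
  simp [gamc, hω g d 1 (by simp), hω (g * d * g⁻¹) 1 g (by simp),
    hω (g * d * g⁻¹) g 1 (by simp)]

theorem IsCocycle.gamc_mul_gamc_mul (hω : IsCocycle ω) (g d e f : G) :
    gamc ω g (d * e) f * gamc ω g d e * ω d e f
      = ω (g * d * g⁻¹) (g * e * g⁻¹) (g * f * g⁻¹) * gamc ω g d (e * f) * gamc ω g e f := by
  have E₁ := congrArg Additive.ofMul (hω g d e f)
  have E₂ := congrArg Additive.ofMul (hω (g * d * g⁻¹) g e f)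
  have E₃ := congrArg Additive.ofMul (hω (g * d * g⁻¹) (g * e * g⁻¹) g f)
  have E₄ := congrArg Additive.ofMul (hω (g * d * g⁻¹) (g * e * g⁻¹) (g * f * g⁻¹) g)
  apply Additive.ofMul.injective
  simp only [gamc, ofMul_mul, ofMul_inv, mul_assoc, inv_mul_cancel_left, inv_mul_cancel,
    mul_one] at *
  linear_combination (norm := abel) E₂ - E₁ - E₃ + E₄

theorem IsCocycle.tauc_mul_gamc (hω : IsCocycle ω) (h g d f : G) :
    tauc ω h g (d * f) * gamc ω (h * g) d f
      = gamc ω g d f * gamc ω h (g * d * g⁻¹) (g * f * g⁻¹) * tauc ω h g d * tauc ω h g f := by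
  have E₁ := congrArg Additive.ofMul (hω h g d f)
  have E₂ := congrArg Additive.ofMul (hω h (g * d * g⁻¹) g f)
  have E₃ := congrArg Additive.ofMul (hω h (g * d * g⁻¹) (g * f * g⁻¹) g)
  have E₄ := congrArg Additive.ofMul (hω (h * g * d * (h * g)⁻¹) h g f)
  have E₅ := congrArg Additive.ofMul (hω (h * g * d * (h * g)⁻¹) h (g * f * g⁻¹) g)
  have E₆ := congrArg Additive.ofMul (hω (h * g * d * (h * g)⁻¹) (h * g * f * (h * g)⁻¹) h g)
  apply Additive.ofMul.injective
  simp only [tauc, gamc, ofMul_mul, ofMul_inv, mul_assoc, mul_inv_rev, inv_mul_cancel_left,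
    inv_mul_cancel, mul_one] at *
  linear_combination (norm := abel) E₁ - E₂ + E₃ + E₄ - E₅ + E₆

end Cocycle

section Tensor

variable {k : Type*} [Field k] {G : Type*} [Group G] [DecidableEq G] {ω : G → G → G → kˣ}
variable {V W : Type*} [AddCommGroup V] [Module k V] [AddCommGroup W] [Module k W]
variable {SV : YDOn k ω V} {SW : YDOn k ω W} {SVW : YDOn k ω (V ⊗[k] W)}

theorem IsTensorStruct.grading_le (hT : IsTensorStruct SV SW SVW) (e : G)
    {P : Submodule k (V ⊗[k] W)}
    (hP : ∀ a : G, ∀ x ∈ SV.grading a, ∀ y ∈ SW.grading (a⁻¹ * e), x ⊗ₜ[k] y ∈ P) :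
    SVW.grading e ≤ P := by
  rw [hT.1]
  exact iSup_le fun a => Submodule.map₂_le.mpr fun x hx y hy => hP a x hx y hy

theorem IsTensorStruct.tmul_mem (hT : IsTensorStruct SV SW SVW) {a b : G} {x : V} {y : W}
    (hx : x ∈ SV.grading a) (hy : y ∈ SW.grading b) : x ⊗ₜ[k] y ∈ SVW.grading (a * b) := by
  rw [hT.1]
  refine Submodule.mem_iSup_of_mem a (Submodule.apply_mem_map₂ _ hx ?_)
  rwa [inv_mul_cancel_left]

end Tensor

section Induced

variable {k : Type*} [Field k] {G : Type*} [Group G] [DecidableEq G] {ω : G → G → G → kˣ}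
  {H : Subgroup G} {V : Type*} [AddCommGroup V] [Module k V]

variable (ω H) in
noncomputable def jgenₗ (S : YDOn k (resCocycle ω H) V) (g : G) : V →ₗ[k] IndCarrier ω H S :=
  (indRel ω H S).mkQ ∘ₗ Finsupp.lsingle g

@[simp]
theorem jgenₗ_apply (S : YDOn k (resCocycle ω H) V) (g : G) (v : V) :
    jgenₗ ω H S g v = jgen ω H S g v :=
  rfl

theorem jgen_smul (S : YDOn k (resCocycle ω H) V) (g : G) (c : k) (v : V) :
    jgen ω H S g (c • v) = c • jgen ω H S g v :=
  (jgenₗ ω H S g).map_smul c v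

theorem jgen_zero (S : YDOn k (resCocycle ω H) V) (g : G) : jgen ω H S g 0 = 0 :=
  (jgenₗ ω H S g).map_zero

theorem IndCarrier.linearMap_ext {S : YDOn k (resCocycle ω H) V}
    {N : Type*} [AddCommGroup N] [Module k N] {F₁ F₂ : IndCarrier ω H S →ₗ[k] N}
    (h : ∀ (g : G) (e : H), ∀ v ∈ S.grading e, F₁ (jgen ω H S g v) = F₂ (jgen ω H S g v)) :
    F₁ = F₂ := by
  refine Submodule.linearMap_qext _ (Finsupp.lhom_ext' fun g => ?_)
  have hle : ⊤ ≤ LinearMap.eqLocus (F₁ ∘ₗ jgenₗ ω H S g) (F₂ ∘ₗ jgenₗ ω H S g) := by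
    rw [← S.internal.submodule_iSup_eq_top]
    exact iSup_le fun e v hv => h g e v hv
  exact LinearMap.ext fun v => hle trivial

theorem IndCarrier.linearMap_ext_tmul {A B : Type*} [AddCommGroup A] [Module k A]
    [AddCommGroup B] [Module k B] {SA : YDOn k (resCocycle ω H) A}
    {SB : YDOn k (resCocycle ω H) B} {SAB : YDOn k (resCocycle ω H) (A ⊗[k] B)}
    (hT : IsTensorStruct SA SB SAB) {N : Type*} [AddCommGroup N] [Module k N]
    {F₁ F₂ : IndCarrier ω H SAB →ₗ[k] N}
    (h : ∀ (g : G) (d f : H), ∀ a ∈ SA.grading d, ∀ b ∈ SB.grading f,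
      F₁ (jgen ω H SAB g (a ⊗ₜ[k] b)) = F₂ (jgen ω H SAB g (a ⊗ₜ[k] b))) :
    F₁ = F₂ :=
  IndCarrier.linearMap_ext fun g e _ hv =>
    hT.grading_le (P := LinearMap.eqLocus (F₁ ∘ₗ jgenₗ ω H SAB g) (F₂ ∘ₗ jgenₗ ω H SAB g)) e
      (fun d a ha b hb => h g d (d⁻¹ * e) a ha b hb) hv

theorem IsIndStruct.jgen_mem {S : YDOn k (resCocycle ω H) V} {T : YDOn k ω (IndCarrier ω H S)}
    (hT : IsIndStruct ω H S T) (g : G) {e : H} {v : V} (hv : v ∈ S.grading e) :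
    jgen ω H S g v ∈ T.grading (g * e * g⁻¹) := by
  rw [hT.1]
  exact Submodule.subset_span ⟨g, e, v, hv, rfl, rfl⟩

theorem IsIndStruct.grading_le {S : YDOn k (resCocycle ω H) V}
    {T : YDOn k ω (IndCarrier ω H S)} (hT : IsIndStruct ω H S T) (d : G)
    {P : Submodule k (IndCarrier ω H S)}
    (hP : ∀ (g : G) (e : H), ∀ v ∈ S.grading e, g * e * g⁻¹ = d → jgen ω H S g v ∈ P) :
    T.grading d ≤ P := by
  rw [hT.1, Submodule.span_le]
  rintro _ ⟨g, e, v, hv, rfl, rfl⟩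
  exact hP g e v hv rfl

end Induced

section Oplax

variable {k : Type*} [Field k] {G : Type*} [Group G] [DecidableEq G] {ω : G → G → G → kˣ}
  {H : Subgroup G} {A B : Type*} [AddCommGroup A] [Module k A] [AddCommGroup B] [Module k B]
  {SA : YDOn k (resCocycle ω H) A} {SB : YDOn k (resCocycle ω H) B}
  {SAB : YDOn k (resCocycle ω H) (A ⊗[k] B)}
  {TA : YDOn k ω (IndCarrier ω H SA)} {TB : YDOn k ω (IndCarrier ω H SB)}
  {TAB : YDOn k ω (IndCarrier ω H SAB)}
  {Tt : YDOn k ω (IndCarrier ω H SA ⊗[k] IndCarrier ω H SB)}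
  {ν : IndCarrier ω H SAB →ₗ[k] IndCarrier ω H SA ⊗[k] IndCarrier ω H SB}

theorem IsNuMap.map_mem_grading (hν : IsNuMap ω H SA SB SAB ν) (hT : IsTensorStruct SA SB SAB)
    (hTA : IsIndStruct ω H SA TA) (hTB : IsIndStruct ω H SB TB)
    (hTAB : IsIndStruct ω H SAB TAB) (hTt : IsTensorStruct TA TB Tt) (d : G) :
    ∀ x ∈ TAB.grading d, ν x ∈ Tt.grading d := by
  refine hTAB.grading_le d (P := (Tt.grading d).comap ν) fun g e w hw hd => ?_
  subst hd
  refine hT.grading_le e (P := ((Tt.grading _).comap ν).comap (jgenₗ ω H SAB g))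
    (fun a p hp q hq => ?_) hw
  have hdeg : g * a * g⁻¹ * (g * ↑(a⁻¹ * e) * g⁻¹) = g * e * g⁻¹ := by push_cast; group
  rw [Submodule.mem_comap, Submodule.mem_comap, jgenₗ_apply, hν g a _ p q hp hq]
  exact Submodule.smul_mem _ _ (hdeg ▸ hTt.tmul_mem (hTA.jgen_mem g hp) (hTB.jgen_mem g hq))

theorem IsNuMap.comp_act (hν : IsNuMap ω H SA SB SAB ν) (hω : IsCocycle ω)
    (hT : IsTensorStruct SA SB SAB) (hTA : IsIndStruct ω H SA TA)
    (hTB : IsIndStruct ω H SB TB) (hTAB : IsIndStruct ω H SAB TAB)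
    (hTt : IsTensorStruct TA TB Tt) (c : G) : ν ∘ₗ TAB.act c = Tt.act c ∘ₗ ν := by
  refine IndCarrier.linearMap_ext_tmul hT fun g d f a ha b hb => ?_
  rw [LinearMap.comp_apply, LinearMap.comp_apply, hTAB.2 c g (d * f) _ (hT.tmul_mem ha hb),
    map_smul, hν (c * g) d f a b ha hb, hν g d f a b ha hb, map_smul,
    hTt.2 c _ _ _ _ (hTA.jgen_mem g ha) (hTB.jgen_mem g hb), hTA.2 c g d a ha,
    hTB.2 c g f b hb, TensorProduct.smul_tmul_smul, smul_smul, smul_smul, smul_smul]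
  congr 1
  rw [← mul_assoc]
  exact_mod_cast congrArg Units.val (hω.tauc_mul_gamc c g d f)

theorem IsNuMap.isYDHom (hν : IsNuMap ω H SA SB SAB ν) (hω : IsCocycle ω)
    (hT : IsTensorStruct SA SB SAB) (hTA : IsIndStruct ω H SA TA)
    (hTB : IsIndStruct ω H SB TB) (hTAB : IsIndStruct ω H SAB TAB)
    (hTt : IsTensorStruct TA TB Tt) : IsYDHom TAB Tt ν :=
  ⟨hν.map_mem_grading hT hTA hTB hTAB hTt, hν.comp_act hω hT hTA hTB hTAB hTt⟩

end Oplax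

section Coherence

variable {k : Type*} [Field k] {G : Type*} [Group G] [DecidableEq G] {ω : G → G → G → kˣ}
  {H : Subgroup G} {V W U : Type*} [AddCommGroup V] [Module k V] [AddCommGroup W] [Module k W]
  [AddCommGroup U] [Module k U]
  {SV : YDOn k (resCocycle ω H) V} {SW : YDOn k (resCocycle ω H) W}
  {SU : YDOn k (resCocycle ω H) U} {SVW : YDOn k (resCocycle ω H) (V ⊗[k] W)}
  {SWU : YDOn k (resCocycle ω H) (W ⊗[k] U)}
  {SVW_U : YDOn k (resCocycle ω H) ((V ⊗[k] W) ⊗[k] U)}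
  {SV_WU : YDOn k (resCocycle ω H) (V ⊗[k] (W ⊗[k] U))}

theorem IndCarrier.linearMap_ext_tmul_tmul (hVW : IsTensorStruct SV SW SVW)
    (hVW_U : IsTensorStruct SVW SU SVW_U) {N : Type*} [AddCommGroup N] [Module k N]
    {F₁ F₂ : IndCarrier ω H SVW_U →ₗ[k] N}
    (h : ∀ (g : G) (d e f : H), ∀ a ∈ SV.grading d, ∀ b ∈ SW.grading e, ∀ c ∈ SU.grading f,
      F₁ (jgen ω H SVW_U g ((a ⊗ₜ[k] b) ⊗ₜ[k] c))
        = F₂ (jgen ω H SVW_U g ((a ⊗ₜ[k] b) ⊗ₜ[k] c))) :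
    F₁ = F₂ :=
  IndCarrier.linearMap_ext_tmul hVW_U fun g de f _ hx c hc =>
    hVW.grading_le de
      (P := LinearMap.eqLocus (F₁ ∘ₗ jgenₗ ω H SVW_U g ∘ₗ (TensorProduct.mk k _ U).flip c)
        (F₂ ∘ₗ jgenₗ ω H SVW_U g ∘ₗ (TensorProduct.mk k _ U).flip c))
      (fun d a ha b hb => h g d (d⁻¹ * de) f a ha b hb c hc) hx

theorem oplax_associativity (hω : IsCocycle ω) (hVW : IsTensorStruct SV SW SVW)
    (hWU : IsTensorStruct SW SU SWU) (hVW_U : IsTensorStruct SVW SU SVW_U)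
    {αH : (V ⊗[k] W) ⊗[k] U →ₗ[k] V ⊗[k] (W ⊗[k] U)} (hαH : IsAssocMap SV SW SU αH)
    {TV : YDOn k ω (IndCarrier ω H SV)} (hTV : IsIndStruct ω H SV TV)
    {TW : YDOn k ω (IndCarrier ω H SW)} (hTW : IsIndStruct ω H SW TW)
    {TU : YDOn k ω (IndCarrier ω H SU)} (hTU : IsIndStruct ω H SU TU)
    {Iα : IndCarrier ω H SVW_U →ₗ[k] IndCarrier ω H SV_WU} (hIα : IsIndMap ω H SVW_U SV_WU αH Iα)
    {ν₂ : IndCarrier ω H SVW_U →ₗ[k] IndCarrier ω H SVW ⊗[k] IndCarrier ω H SU}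
    (hν₂ : IsNuMap ω H SVW SU SVW_U ν₂)
    {ν₁ : IndCarrier ω H SVW →ₗ[k] IndCarrier ω H SV ⊗[k] IndCarrier ω H SW}
    (hν₁ : IsNuMap ω H SV SW SVW ν₁)
    {ν₄ : IndCarrier ω H SV_WU →ₗ[k] IndCarrier ω H SV ⊗[k] IndCarrier ω H SWU}
    (hν₄ : IsNuMap ω H SV SWU SV_WU ν₄)
    {ν₃ : IndCarrier ω H SWU →ₗ[k] IndCarrier ω H SW ⊗[k] IndCarrier ω H SU}
    (hν₃ : IsNuMap ω H SW SU SWU ν₃)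
    {αG : (IndCarrier ω H SV ⊗[k] IndCarrier ω H SW) ⊗[k] IndCarrier ω H SU →ₗ[k]
      IndCarrier ω H SV ⊗[k] (IndCarrier ω H SW ⊗[k] IndCarrier ω H SU)}
    (hαG : IsAssocMap TV TW TU αG) :
    αG ∘ₗ TensorProduct.map ν₁ LinearMap.id ∘ₗ ν₂
      = TensorProduct.map LinearMap.id ν₃ ∘ₗ ν₄ ∘ₗ Iα := by
  refine IndCarrier.linearMap_ext_tmul_tmul hVW hVW_U fun g d e f a ha b hb c hc => ?_
  simp only [LinearMap.comp_apply, hν₂ g _ f _ c (hVW.tmul_mem ha hb) hc, hIα g,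
    hαH d e f a b c ha hb hc, jgen_smul, hν₄ g d _ a _ ha (hWU.tmul_mem hb hc), map_smul,
    TensorProduct.map_tmul, hν₁ g d e a b ha hb, hν₃ g e f b c hb hc, LinearMap.id_apply,
    ← TensorProduct.smul_tmul', TensorProduct.tmul_smul, smul_smul,
    hαG _ _ _ _ _ _ (hTV.jgen_mem g ha) (hTW.jgen_mem g hb) (hTU.jgen_mem g hc)]
  congr 1
  have key := congrArg Units.val (hω.gamc_mul_gamc_mul g d e f)
  push_cast [resCocycle] at key ⊢
  field_simp
  linear_combination key

theorem IsUnitStruct.eq_zero_of_mem_grading {S : YDOn k (resCocycle ω H) k}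
    (hS : IsUnitStruct S) {d : H} (hd : d ≠ 1) {c : k} (hc : c ∈ S.grading d) : c = 0 := by
  rwa [hS.2.1 d hd, Submodule.mem_bot] at hc

theorem oplax_left_counitality (hω : IsNormalized ω) {S1 : YDOn k (resCocycle ω H) k}
    (hS1 : IsUnitStruct S1) {εI : IndCarrier ω H S1 →ₗ[k] k} (hε : IsCounitMap ω H S1 εI)
    {S1V : YDOn k (resCocycle ω H) (k ⊗[k] V)} (h1V : IsTensorStruct S1 SV S1V)
    {Ilam : IndCarrier ω H S1V →ₗ[k] IndCarrier ω H SV}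
    (hIlam : IsIndMap ω H S1V SV (TensorProduct.lid k V).toLinearMap Ilam)
    {νl : IndCarrier ω H S1V →ₗ[k] IndCarrier ω H S1 ⊗[k] IndCarrier ω H SV}
    (hνl : IsNuMap ω H S1 SV S1V νl) :
    (TensorProduct.lid k (IndCarrier ω H SV)).toLinearMap
      ∘ₗ TensorProduct.map εI LinearMap.id ∘ₗ νl = Ilam := by
  refine IndCarrier.linearMap_ext_tmul h1V fun g d f c hc v hv => ?_
  obtain rfl | hd := eq_or_ne d 1
  · simp [hνl g 1 f c v hc hv, hIlam g, hω.gamc_one_left, hε g, jgen_smul]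
  · simp [hS1.eq_zero_of_mem_grading hd hc, jgen_zero]

theorem oplax_right_counitality (hω : IsNormalized ω) {S1 : YDOn k (resCocycle ω H) k}
    (hS1 : IsUnitStruct S1) {εI : IndCarrier ω H S1 →ₗ[k] k} (hε : IsCounitMap ω H S1 εI)
    {SV1 : YDOn k (resCocycle ω H) (V ⊗[k] k)} (hV1 : IsTensorStruct SV S1 SV1)
    {Irho : IndCarrier ω H SV1 →ₗ[k] IndCarrier ω H SV}
    (hIrho : IsIndMap ω H SV1 SV (TensorProduct.rid k V).toLinearMap Irho)
    {νr : IndCarrier ω H SV1 →ₗ[k] IndCarrier ω H SV ⊗[k] IndCarrier ω H S1}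
    (hνr : IsNuMap ω H SV S1 SV1 νr) :
    (TensorProduct.rid k (IndCarrier ω H SV)).toLinearMap
      ∘ₗ TensorProduct.map LinearMap.id εI ∘ₗ νr = Irho := by
  refine IndCarrier.linearMap_ext_tmul hV1 fun g d f v hv c hc => ?_
  obtain rfl | hf := eq_or_ne f 1
  · simp [hνr g d 1 v c hv hc, hIrho g, hω.gamc_one_right, hε g, jgen_smul]
  · simp [hS1.eq_zero_of_mem_grading hf hc, jgen_zero]

end Coherence

end DW

theorem induction_oplax_general {k : Type*} [Field k] {G : Type*} [Group G]
    [DecidableEq G] (ω : G → G → G → kˣ)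
    (hω : IsCocycle ω) (hnorm : IsNormalized ω) (H : Subgroup G) :
    -- ν_{V,W} is a morphism of twisted Yetter–Drinfeld modules over (G, ω)
    (∀ (V W : Type) [AddCommGroup V] [Module k V] [AddCommGroup W] [Module k W]
        (SV : YDOn k (resCocycle ω H) V) (SW : YDOn k (resCocycle ω H) W)
        (SVW : YDOn k (resCocycle ω H) (V ⊗[k] W)), IsTensorStruct SV SW SVW →
      ∀ (TV : YDOn k ω (IndCarrier ω H SV)) (TW : YDOn k ω (IndCarrier ω H SW))
        (TVW : YDOn k ω (IndCarrier ω H SVW)),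
        IsIndStruct ω H SV TV → IsIndStruct ω H SW TW → IsIndStruct ω H SVW TVW →
      ∀ (Tt : YDOn k ω (IndCarrier ω H SV ⊗[k] IndCarrier ω H SW)),
        IsTensorStruct TV TW Tt →
      ∀ ν : IndCarrier ω H SVW →ₗ[k] IndCarrier ω H SV ⊗[k] IndCarrier ω H SW,
        IsNuMap ω H SV SW SVW ν → IsYDHom TVW Tt ν) ∧
    -- oplax associativity coherence
    (∀ (V W U : Type) [AddCommGroup V] [Module k V] [AddCommGroup W] [Module k W]
        [AddCommGroup U] [Module k U]
        (SV : YDOn k (resCocycle ω H) V) (SW : YDOn k (resCocycle ω H) W)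
        (SU : YDOn k (resCocycle ω H) U)
        (SVW : YDOn k (resCocycle ω H) (V ⊗[k] W)) (_ : IsTensorStruct SV SW SVW)
        (SWU : YDOn k (resCocycle ω H) (W ⊗[k] U)) (_ : IsTensorStruct SW SU SWU)
        (SVW_U : YDOn k (resCocycle ω H) ((V ⊗[k] W) ⊗[k] U))
        (_ : IsTensorStruct SVW SU SVW_U)
        (SV_WU : YDOn k (resCocycle ω H) (V ⊗[k] (W ⊗[k] U)))
        (_ : IsTensorStruct SV SWU SV_WU)
        (αH : (V ⊗[k] W) ⊗[k] U →ₗ[k] V ⊗[k] (W ⊗[k] U)) (_ : IsAssocMap SV SW SU αH)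
        (TV : YDOn k ω (IndCarrier ω H SV)) (_ : IsIndStruct ω H SV TV)
        (TW : YDOn k ω (IndCarrier ω H SW)) (_ : IsIndStruct ω H SW TW)
        (TU : YDOn k ω (IndCarrier ω H SU)) (_ : IsIndStruct ω H SU TU)
        (Iα : IndCarrier ω H SVW_U →ₗ[k] IndCarrier ω H SV_WU)
        (_ : IsIndMap ω H SVW_U SV_WU αH Iα)
        (ν₂ : IndCarrier ω H SVW_U →ₗ[k] IndCarrier ω H SVW ⊗[k] IndCarrier ω H SU)
        (_ : IsNuMap ω H SVW SU SVW_U ν₂)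
        (ν₁ : IndCarrier ω H SVW →ₗ[k] IndCarrier ω H SV ⊗[k] IndCarrier ω H SW)
        (_ : IsNuMap ω H SV SW SVW ν₁)
        (ν₄ : IndCarrier ω H SV_WU →ₗ[k] IndCarrier ω H SV ⊗[k] IndCarrier ω H SWU)
        (_ : IsNuMap ω H SV SWU SV_WU ν₄)
        (ν₃ : IndCarrier ω H SWU →ₗ[k] IndCarrier ω H SW ⊗[k] IndCarrier ω H SU)
        (_ : IsNuMap ω H SW SU SWU ν₃)
        (αG : (IndCarrier ω H SV ⊗[k] IndCarrier ω H SW) ⊗[k] IndCarrier ω H SU →ₗ[k]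
            IndCarrier ω H SV ⊗[k] (IndCarrier ω H SW ⊗[k] IndCarrier ω H SU)),
        IsAssocMap TV TW TU αG →
        αG ∘ₗ TensorProduct.map ν₁ LinearMap.id ∘ₗ ν₂
          = TensorProduct.map LinearMap.id ν₃ ∘ₗ ν₄ ∘ₗ Iα) ∧
    -- oplax counitality coherence (left and right)
    (∀ (V : Type) [AddCommGroup V] [Module k V]
        (SV : YDOn k (resCocycle ω H) V)
        (S1 : YDOn k (resCocycle ω H) k) (_ : IsUnitStruct S1)
        (εI : IndCarrier ω H S1 →ₗ[k] k) (_ : IsCounitMap ω H S1 εI)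
        (S1V : YDOn k (resCocycle ω H) (k ⊗[k] V)) (_ : IsTensorStruct S1 SV S1V)
        (SV1 : YDOn k (resCocycle ω H) (V ⊗[k] k)) (_ : IsTensorStruct SV S1 SV1)
        (Ilam : IndCarrier ω H S1V →ₗ[k] IndCarrier ω H SV)
        (_ : IsIndMap ω H S1V SV (TensorProduct.lid k V).toLinearMap Ilam)
        (Irho : IndCarrier ω H SV1 →ₗ[k] IndCarrier ω H SV)
        (_ : IsIndMap ω H SV1 SV (TensorProduct.rid k V).toLinearMap Irho)
        (νl : IndCarrier ω H S1V →ₗ[k] IndCarrier ω H S1 ⊗[k] IndCarrier ω H SV)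
        (_ : IsNuMap ω H S1 SV S1V νl)
        (νr : IndCarrier ω H SV1 →ₗ[k] IndCarrier ω H SV ⊗[k] IndCarrier ω H S1),
        IsNuMap ω H SV S1 SV1 νr →
        (TensorProduct.lid k (IndCarrier ω H SV)).toLinearMap
            ∘ₗ TensorProduct.map εI LinearMap.id ∘ₗ νl = Ilam ∧
        (TensorProduct.rid k (IndCarrier ω H SV)).toLinearMap
            ∘ₗ TensorProduct.map LinearMap.id εI ∘ₗ νr = Irho) :=
  ⟨fun _ _ _ _ _ _ _ _ _ hT _ _ _ hTV hTW hTVW _ hTt _ hν =>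
      hν.isYDHom hω hT hTV hTW hTVW hTt,
    fun _ _ _ _ _ _ _ _ _ _ _ _ _ hVW _ hWU _ hVW_U _ _ _ hαH _ hTV _ hTW _ hTU _ hIα _ hν₂ _ hν₁
        _ hν₄ _ hν₃ _ hαG =>
      oplax_associativity hω hVW hWU hVW_U hαH hTV hTW hTU hIα hν₂ hν₁ hν₄ hν₃ hαG,
    fun _ _ _ _ _ hS1 _ hε _ h1V _ hV1 _ hIlam _ hIrho _ hνl _ hνr =>
      ⟨oplax_left_counitality hnorm hS1 hε h1V hIlam hνl,
        oplax_right_counitality hnorm hS1 hε hV1 hIrho hνr⟩⟩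

/-- Lemma 3.8: the natural transformation
`ν_{V,W}(g ⊗ (v_d ⊗ w_f)) = γ(g)(d,f) (g⊗v_d) ⊗ (g⊗w_f)`, together with the counit
`I(1) → 1, g⊗1 ↦ 1`, equips the induction functor `I : Z(Vect_H^ω) → Z(Vect_G^ω)` with an
oplax monoidal structure: each `ν_{V,W}` is a morphism of twisted Yetter–Drinfeld modules
over `(G,ω)` and the oplax associativity and counitality coherence conditions hold. -/
theorem induction_oplax {k : Type*} [Field k] [IsAlgClosed k] {G : Type*} [Group G]
    [Finite G] [DecidableEq G] (ω : G → G → G → kˣ)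
    (hω : IsCocycle ω) (hnorm : IsNormalized ω) (H : Subgroup G) :
    -- ν_{V,W} is a morphism of twisted Yetter–Drinfeld modules over (G, ω)
    (∀ (V W : Type) [AddCommGroup V] [Module k V] [AddCommGroup W] [Module k W]
        (SV : YDOn k (resCocycle ω H) V) (SW : YDOn k (resCocycle ω H) W)
        (SVW : YDOn k (resCocycle ω H) (V ⊗[k] W)), IsTensorStruct SV SW SVW →
      ∀ (TV : YDOn k ω (IndCarrier ω H SV)) (TW : YDOn k ω (IndCarrier ω H SW))
        (TVW : YDOn k ω (IndCarrier ω H SVW)),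
        IsIndStruct ω H SV TV → IsIndStruct ω H SW TW → IsIndStruct ω H SVW TVW →
      ∀ (Tt : YDOn k ω (IndCarrier ω H SV ⊗[k] IndCarrier ω H SW)),
        IsTensorStruct TV TW Tt →
      ∀ ν : IndCarrier ω H SVW →ₗ[k] IndCarrier ω H SV ⊗[k] IndCarrier ω H SW,
        IsNuMap ω H SV SW SVW ν → IsYDHom TVW Tt ν) ∧
    -- oplax associativity coherence
    (∀ (V W U : Type) [AddCommGroup V] [Module k V] [AddCommGroup W] [Module k W]
        [AddCommGroup U] [Module k U]
        (SV : YDOn k (resCocycle ω H) V) (SW : YDOn k (resCocycle ω H) W)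
        (SU : YDOn k (resCocycle ω H) U)
        (SVW : YDOn k (resCocycle ω H) (V ⊗[k] W)) (_ : IsTensorStruct SV SW SVW)
        (SWU : YDOn k (resCocycle ω H) (W ⊗[k] U)) (_ : IsTensorStruct SW SU SWU)
        (SVW_U : YDOn k (resCocycle ω H) ((V ⊗[k] W) ⊗[k] U))
        (_ : IsTensorStruct SVW SU SVW_U)
        (SV_WU : YDOn k (resCocycle ω H) (V ⊗[k] (W ⊗[k] U)))
        (_ : IsTensorStruct SV SWU SV_WU)
        (αH : (V ⊗[k] W) ⊗[k] U →ₗ[k] V ⊗[k] (W ⊗[k] U)) (_ : IsAssocMap SV SW SU αH)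
        (TV : YDOn k ω (IndCarrier ω H SV)) (_ : IsIndStruct ω H SV TV)
        (TW : YDOn k ω (IndCarrier ω H SW)) (_ : IsIndStruct ω H SW TW)
        (TU : YDOn k ω (IndCarrier ω H SU)) (_ : IsIndStruct ω H SU TU)
        (Iα : IndCarrier ω H SVW_U →ₗ[k] IndCarrier ω H SV_WU)
        (_ : IsIndMap ω H SVW_U SV_WU αH Iα)
        (ν₂ : IndCarrier ω H SVW_U →ₗ[k] IndCarrier ω H SVW ⊗[k] IndCarrier ω H SU)
        (_ : IsNuMap ω H SVW SU SVW_U ν₂)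
        (ν₁ : IndCarrier ω H SVW →ₗ[k] IndCarrier ω H SV ⊗[k] IndCarrier ω H SW)
        (_ : IsNuMap ω H SV SW SVW ν₁)
        (ν₄ : IndCarrier ω H SV_WU →ₗ[k] IndCarrier ω H SV ⊗[k] IndCarrier ω H SWU)
        (_ : IsNuMap ω H SV SWU SV_WU ν₄)
        (ν₃ : IndCarrier ω H SWU →ₗ[k] IndCarrier ω H SW ⊗[k] IndCarrier ω H SU)
        (_ : IsNuMap ω H SW SU SWU ν₃)
        (αG : (IndCarrier ω H SV ⊗[k] IndCarrier ω H SW) ⊗[k] IndCarrier ω H SU →ₗ[k]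
            IndCarrier ω H SV ⊗[k] (IndCarrier ω H SW ⊗[k] IndCarrier ω H SU)),
        IsAssocMap TV TW TU αG →
        αG ∘ₗ TensorProduct.map ν₁ LinearMap.id ∘ₗ ν₂
          = TensorProduct.map LinearMap.id ν₃ ∘ₗ ν₄ ∘ₗ Iα) ∧
    -- oplax counitality coherence (left and right)
    (∀ (V : Type) [AddCommGroup V] [Module k V]
        (SV : YDOn k (resCocycle ω H) V)
        (S1 : YDOn k (resCocycle ω H) k) (_ : IsUnitStruct S1)
        (εI : IndCarrier ω H S1 →ₗ[k] k) (_ : IsCounitMap ω H S1 εI)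
        (S1V : YDOn k (resCocycle ω H) (k ⊗[k] V)) (_ : IsTensorStruct S1 SV S1V)
        (SV1 : YDOn k (resCocycle ω H) (V ⊗[k] k)) (_ : IsTensorStruct SV S1 SV1)
        (Ilam : IndCarrier ω H S1V →ₗ[k] IndCarrier ω H SV)
        (_ : IsIndMap ω H S1V SV (TensorProduct.lid k V).toLinearMap Ilam)
        (Irho : IndCarrier ω H SV1 →ₗ[k] IndCarrier ω H SV)
        (_ : IsIndMap ω H SV1 SV (TensorProduct.rid k V).toLinearMap Irho)
        (νl : IndCarrier ω H S1V →ₗ[k] IndCarrier ω H S1 ⊗[k] IndCarrier ω H SV)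
        (_ : IsNuMap ω H S1 SV S1V νl)
        (νr : IndCarrier ω H SV1 →ₗ[k] IndCarrier ω H SV ⊗[k] IndCarrier ω H S1),
        IsNuMap ω H SV S1 SV1 νr →
        (TensorProduct.lid k (IndCarrier ω H SV)).toLinearMap
            ∘ₗ TensorProduct.map εI LinearMap.id ∘ₗ νl = Ilam ∧
        (TensorProduct.rid k (IndCarrier ω H SV)).toLinearMap
            ∘ₗ TensorProduct.map LinearMap.id εI ∘ₗ νr = Irho) :=
  induction_oplax_general ω hω hnorm H
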